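/- Let i ≠ i* be a sub-optimal arm, let n ≥ 1, let τ be any real number, and let u be any integer with 1 ≤ u ≤ n. Then the tail of the play count of arm i satisfies the union bound P(T_i(n) > u) ≤ ∑_{t=u}^{n} P(U_{i,u,t} > τ) + ∑_{s=1}^{n−u} P(U_{i*,s,u+s} ≤ τ). -/
import Mathlib


open MeasureTheory ProbabilityTheory Finset

noncomputable section

/-- Empirical average `X̄_{i,n} = (1/n) ∑_{t=1}^n X_{i,t}` of the first `n` rewards of arm `i`. -/
def empAvg {Ω : Type*} {K : ℕ} (X : Fin K → ℕ → Ω → ℝ) (i : Fin K) (n : ℕ) (ω : Ω) : ℝ :=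
  (∑ t ∈ Finset.Icc 1 n, X i t ω) / n

/-- Bonus term `B_{t,s} = β^{1/ξ} t^{α/ξ} / s^{1-η}`. -/
def bonus (β ξ α η : ℝ) (t s : ℕ) : ℝ :=
  β ^ (1 / ξ) * (t : ℝ) ^ (α / ξ) / (s : ℝ) ^ (1 - η)

/-- Upper confidence index `U_{i,s,t} = X̄_{i,s} + B_{t,s}`. -/
def ucbIdx {Ω : Type*} {K : ℕ} (X : Fin K → ℕ → Ω → ℝ) (β ξ α η : ℝ)
    (i : Fin K) (s t : ℕ) (ω : Ω) : ℝ :=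
  empAvg X i s ω + bonus β ξ α η t s

/-- `T_i(t) = ∑_{l=1}^t 1{I_l = i}`, the number of plays of arm `i` up to (and including)
time `t`. -/
def playCount {Ω : Type*} {K : ℕ} (I : ℕ → Ω → Fin K) (i : Fin K) (t : ℕ) (ω : Ω) : ℕ :=
  ((Finset.Icc 1 t).filter fun l => I l ω = i).card

/-- The `EReal`-valued index `X̄_{i,T_i(t)} + B_{t,T_i(t)}` used by the UCB policy at the end
of time `t`, with the convention that the index is `+∞` when `T_i(t) = 0`
(i.e. `B_{t,0} = +∞`). -/
def ucbIdxE {Ω : Type*} {K : ℕ} (X : Fin K → ℕ → Ω → ℝ) (β ξ α η : ℝ)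
    (I : ℕ → Ω → Fin K) (j : Fin K) (t : ℕ) (ω : Ω) : EReal :=
  if playCount I j t ω = 0 then ⊤
  else ((ucbIdx X β ξ α η j (playCount I j t ω) t ω : ℝ) : EReal)

lemma playCount_mono {Ω : Type*} {K : ℕ} (I : ℕ → Ω → Fin K) (j : Fin K) (ω : Ω)
    {a b : ℕ} (h : a ≤ b) : playCount I j a ω ≤ playCount I j b ω := by
  unfold playCount
  exact Finset.card_le_card (Finset.filter_subset_filter _ (Finset.Icc_subset_Icc_right h))

lemma playCount_le {Ω : Type*} {K : ℕ} (I : ℕ → Ω → Fin K) (j : Fin K) (t : ℕ) (ω : Ω) :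
    playCount I j t ω ≤ t := by
  unfold playCount
  calc ((Finset.Icc 1 t).filter fun l => I l ω = j).card ≤ (Finset.Icc 1 t).card :=
        Finset.card_filter_le _ _
    _ = t := by rw [Nat.card_Icc]; omega

lemma playCount_succ {Ω : Type*} {K : ℕ} (I : ℕ → Ω → Fin K) (j : Fin K) (m : ℕ) (ω : Ω) :
    playCount I j (m + 1) ω
      = playCount I j m ω + (if I (m + 1) ω = j then 1 else 0) := by
  unfold playCount
  have h : Finset.Icc 1 (m + 1) = insert (m + 1) (Finset.Icc 1 m) := by
    ext x; simp [Finset.mem_Icc, Finset.mem_insert]; omega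
  rw [h, Finset.filter_insert]
  split_ifs with hc
  · rw [Finset.card_insert_of_notMem (by simp [Finset.mem_Icc])]
  · simp

lemma playCount_add_le {Ω : Type*} {K : ℕ} (I : ℕ → Ω → Fin K) {j j' : Fin K}
    (hjj : j ≠ j') (t : ℕ) (ω : Ω) :
    playCount I j t ω + playCount I j' t ω ≤ t := by
  unfold playCount
  rw [← Finset.card_union_of_disjoint]
  · calc _ ≤ (Finset.Icc 1 t).card :=
        Finset.card_le_card (Finset.union_subset (Finset.filter_subset _ _)
          (Finset.filter_subset _ _))
      _ = t := by rw [Nat.card_Icc]; omega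
  · refine Finset.disjoint_filter_filter' _ _ ?_
    intro p hp hp' l hl
    exact absurd ((hp l hl).symm.trans (hp' l hl)) hjj

lemma bonus_mono {β ξ α η : ℝ} (hβ : 1 < β) (hξ : 0 < ξ) (hη' : η < 1) (hα : 0 < α)
    {t t' s : ℕ} (ht : t ≤ t') : bonus β ξ α η t s ≤ bonus β ξ α η t' s := by
  unfold bonus
  have h1 : (0:ℝ) ≤ β ^ (1 / ξ) := Real.rpow_nonneg (by linarith) _
  have h2 : (t:ℝ) ^ (α / ξ) ≤ (t':ℝ) ^ (α / ξ) :=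
    Real.rpow_le_rpow (Nat.cast_nonneg _) (by exact_mod_cast ht)
      (le_of_lt (div_pos hα hξ))
  rcases Nat.eq_zero_or_pos s with hs | hs
  · rw [hs]
    simp [Real.zero_rpow (by linarith : (1:ℝ) - η ≠ 0)]
  · have hsp : (0:ℝ) < (s:ℝ) ^ (1 - η) :=
      Real.rpow_pos_of_pos (by exact_mod_cast hs) _
    exact (div_le_div_iff_of_pos_right hsp).mpr (mul_le_mul_of_nonneg_left h2 h1)

/-- Union bound on the tail of the play count of a sub-optimal arm:
`P(T_i(n) > u) ≤ ∑_{t=u}^n P(U_{i,u,t} > τ) + ∑_{s=1}^{n−u} P(U_{i*,s,u+s} ≤ τ)`. -/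
theorem ucb_playCount_tail_union_bound
    {Ω : Type*} [MeasurableSpace Ω] (P : Measure Ω) [IsProbabilityMeasure P]
    (K : ℕ) (hK : 2 ≤ K) (R : ℝ) (hR : 0 < R)
    (X : Fin K → ℕ → Ω → ℝ)
    (hXmeas : ∀ i t, Measurable (X i t))
    (hXbdd : ∀ i t ω, |X i t ω| ≤ R)
    (μ : Fin K → ℝ)
    (hconv : ∀ i, Filter.Tendsto (fun n => ∫ ω, empAvg X i n ω ∂P)
      Filter.atTop (nhds (μ i)))
    (β ξ η α : ℝ) (hβ : 1 < β) (hξ : 0 < ξ) (hη : 1 / 2 ≤ η) (hη' : η < 1) (hα : 0 < α)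
    (istar : Fin K) (hopt : ∀ j, j ≠ istar → μ j < μ istar)
    (I : ℕ → Ω → Fin K)
    (hImeas : ∀ t, Measurable (I t))
    (hPolicy : ∀ t : ℕ, 1 ≤ t → ∀ ω : Ω, ∀ j : Fin K,
      ucbIdxE X β ξ α η I j (t - 1) ω ≤ ucbIdxE X β ξ α η I (I t ω) (t - 1) ω)
    (i : Fin K) (hi : i ≠ istar)
    (n u : ℕ) (hu1 : 1 ≤ u) (hun : u ≤ n) (τ : ℝ) :
    P {ω | u < playCount I i n ω}
      ≤ (∑ t ∈ Finset.Icc u n, P {ω | ucbIdx X β ξ α η i u t ω > τ})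
        + ∑ s ∈ Finset.Icc 1 (n - u), P {ω | ucbIdx X β ξ α η istar s (u + s) ω ≤ τ} := by
  classical
  set A : ℕ → Set Ω := fun t => {ω | ucbIdx X β ξ α η i u t ω > τ} with hA
  set B : ℕ → Set Ω := fun s => {ω | ucbIdx X β ξ α η istar s (u + s) ω ≤ τ} with hB
  have hincl : {ω | u < playCount I i n ω}
      ⊆ (⋃ t ∈ Finset.Icc u n, A t) ∪ ⋃ s ∈ Finset.Icc 1 (n - u), B s := by
    intro ω hω
    simp only [Set.mem_setOf_eq] at hω
    -- find the time of the (u+1)-st play of arm i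
    have hex : ∃ t, u + 1 ≤ playCount I i t ω := ⟨n, hω⟩
    set t₀ := Nat.find hex with ht₀
    have ht₀n : t₀ ≤ n := Nat.find_le hω
    have ht₀spec : u + 1 ≤ playCount I i t₀ ω := Nat.find_spec hex
    have ht₀pos : t₀ ≠ 0 := by
      intro h
      rw [h] at ht₀spec
      simp [playCount] at ht₀spec
    obtain ⟨m, hm⟩ : ∃ m, t₀ = m + 1 := ⟨t₀ - 1, by omega⟩
    have hmlt : ¬ (u + 1 ≤ playCount I i m ω) := Nat.find_min hex (by omega)
    rw [hm, playCount_succ] at ht₀spec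
    have hfm : playCount I i m ω = u := by split_ifs at ht₀spec <;> omega
    have hIm : I (m + 1) ω = i := by
      by_contra hc
      rw [if_neg hc] at ht₀spec; omega
    -- policy inequality at time m+1
    have hpol := hPolicy (m + 1) (by omega) ω istar
    rw [hIm] at hpol
    simp only [Nat.add_sub_cancel] at hpol
    have hiE : ucbIdxE X β ξ α η I i m ω
        = ((ucbIdx X β ξ α η i u m ω : ℝ) : EReal) := by
      rw [ucbIdxE, hfm, if_neg (by omega)]
    rw [hiE] at hpol
    -- istar must have been played
    have hsne : playCount I istar m ω ≠ 0 := by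
      intro h
      rw [ucbIdxE, if_pos h] at hpol
      exact absurd hpol (by simp [EReal.coe_lt_top])
    set s := playCount I istar m ω with hs
    rw [ucbIdxE, if_neg hsne] at hpol
    have hreal : ucbIdx X β ξ α η istar s m ω ≤ ucbIdx X β ξ α η i u m ω :=
      EReal.coe_le_coe_iff.mp hpol
    have hum : u ≤ m := hfm ▸ playCount_le I i m ω
    have hsum : u + s ≤ m := by
      have := playCount_add_le I hi m ω
      rw [hfm] at this; omega
    have hs1 : 1 ≤ s := by omega
    have hmn : m ≤ n := by omega
    by_cases hcase : τ < ucbIdx X β ξ α η i u m ω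
    · left
      exact Set.mem_biUnion (Finset.mem_Icc.mpr ⟨hum, hmn⟩) hcase
    · right
      push_neg at hcase
      refine Set.mem_biUnion (Finset.mem_Icc.mpr ⟨hs1, by omega⟩) ?_
      have hmono : ucbIdx X β ξ α η istar s (u + s) ω ≤ ucbIdx X β ξ α η istar s m ω := by
        unfold ucbIdx
        have := bonus_mono (s := s) hβ hξ hη' hα hsum
        linarith
      exact le_trans hmono (le_trans hreal hcase)
  calc P {ω | u < playCount I i n ω}
      ≤ P ((⋃ t ∈ Finset.Icc u n, A t) ∪ ⋃ s ∈ Finset.Icc 1 (n - u), B s) :=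
        measure_mono hincl
    _ ≤ P (⋃ t ∈ Finset.Icc u n, A t) + P (⋃ s ∈ Finset.Icc 1 (n - u), B s) :=
        measure_union_le _ _
    _ ≤ (∑ t ∈ Finset.Icc u n, P (A t)) + ∑ s ∈ Finset.Icc 1 (n - u), P (B s) := by
        gcongr <;> exact measure_biUnion_finset_le _ _
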